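/- arXiv:2103.11529 — 2 statements merged into one kernel-verified Lean document; each statement's English description precedes it below -/
import Mathlib

section
/- Let Z^{(ℓ)} be the N×N matrix whose p-th row has entry 1 in column q1 and entry 1 in column q2, where q1 = p-ℓ if p-ℓ ≥ 1 and q1 = -p+ℓ+1 otherwise, and q2 = p+ℓ if p+ℓ ≤ N and q2 = -p-ℓ+2N+1 otherwise (entries add if q1 = q2). Then for each j ∈ {1,...,N}, the DCT-II basis vector u_j is an eigenvector of Z^{(ℓ)} with eigenvalue 2cos(ℓ(j-1)π/N). -/
open Real

/-- Column index `q1` (1-based) for row `p` (1-based) of the sparse DCT-II operator. -/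
def q1Z (ℓ : ℕ) (p : ℤ) : ℤ := if 1 ≤ p - ℓ then p - ℓ else -p + ℓ + 1

/-- Column index `q2` (1-based) for row `p` (1-based) of the sparse DCT-II operator. -/
def q2Z (N ℓ : ℕ) (p : ℤ) : ℤ := if p + ℓ ≤ N then p + ℓ else -p - ℓ + 2 * N + 1

/-- Sparse DCT-II operator `Z^{(ℓ)}`: row `p` has a 1 in columns `q1` and `q2`
(entries adding if `q1 = q2`). Indices of `Fin N` are converted to 1-based. -/
noncomputable def Zdct (N ℓ : ℕ) : Matrix (Fin N) (Fin N) ℝ :=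
  Matrix.of fun p q =>
    (if ((q : ℤ) + 1) = q1Z ℓ ((p : ℤ) + 1) then 1 else 0) +
    (if ((q : ℤ) + 1) = q2Z N ℓ ((p : ℤ) + 1) then 1 else 0)

/-- DCT-II basis vector (zero-based `j`, `k`). -/
noncomputable def uDCT (N : ℕ) (j : Fin N) : Fin N → ℝ := fun k =>
  Real.sqrt (2 / N) * (if (j : ℕ) = 0 then 1 / Real.sqrt 2 else 1) *
    Real.cos ((j : ℝ) * ((k : ℝ) + 1 / 2) * Real.pi / N)

/-- extended cosine sample -/
noncomputable def gS (N j : ℕ) (k : ℤ) : ℝ :=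
  Real.cos ((j : ℝ) * ((k : ℝ) + 1 / 2) * Real.pi / N)

lemma gS_reflect_left (N j : ℕ) (k : ℤ) : gS N j (-k - 1) = gS N j k := by
  unfold gS
  have : (j : ℝ) * (((-k - 1 : ℤ) : ℝ) + 1 / 2) * Real.pi / N
      = -((j : ℝ) * ((k : ℝ) + 1 / 2) * Real.pi / N) := by
    push_cast; ring
  rw [this, Real.cos_neg]

lemma gS_reflect_right (N j : ℕ) (hN : 0 < N) (k : ℤ) :
    gS N j (2 * N - 1 - k) = gS N j k := by
  unfold gS
  have hN' : (N : ℝ) ≠ 0 := by positivity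
  have : (j : ℝ) * (((2 * (N : ℤ) - 1 - k : ℤ) : ℝ) + 1 / 2) * Real.pi / N
      = (j : ℤ) * (2 * Real.pi) - (j : ℝ) * ((k : ℝ) + 1 / 2) * Real.pi / N := by
    push_cast; field_simp; ring
  rw [this, Real.cos_sub, Real.cos_int_mul_two_pi]
  have : ((j : ℤ) : ℝ) * (2 * Real.pi) = ((2 * j : ℤ) : ℝ) * Real.pi := by push_cast; ring
  rw [this, Real.sin_int_mul_pi]
  ring

lemma gS_sum (N j ℓ : ℕ) (hN : 0 < N) (k : ℤ) :
    gS N j (k - ℓ) + gS N j (k + ℓ)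
      = 2 * Real.cos ((ℓ : ℝ) * (j : ℝ) * Real.pi / N) * gS N j k := by
  unfold gS
  have hN' : (N : ℝ) ≠ 0 := by positivity
  set A : ℝ := (j : ℝ) * ((k : ℝ) + 1 / 2) * Real.pi / N with hA
  set B : ℝ := (ℓ : ℝ) * (j : ℝ) * Real.pi / N with hB
  have h1 : (j : ℝ) * (((k - (ℓ:ℤ) : ℤ) : ℝ) + 1 / 2) * Real.pi / N = A - B := by
    rw [hA, hB]; push_cast; field_simp; ring
  have h2 : (j : ℝ) * (((k + (ℓ:ℤ) : ℤ) : ℝ) + 1 / 2) * Real.pi / N = A + B := by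
    rw [hA, hB]; push_cast; field_simp; ring
  rw [h1, h2, Real.cos_sub, Real.cos_add]
  ring

lemma sum_pick {N : ℕ} (Q : ℤ) (hQ1 : 1 ≤ Q) (hQN : Q ≤ N) (u : Fin N → ℝ) :
    (∑ q : Fin N, (if ((q : ℤ) + 1) = Q then (1:ℝ) else 0) * u q)
      = u ⟨(Q - 1).toNat, by omega⟩ := by
  have hlt : (Q - 1).toNat < N := by omega
  have h : ∀ q : Fin N, (if ((q : ℤ) + 1) = Q then (1:ℝ) else 0) * u q
      = if q = ⟨(Q - 1).toNat, hlt⟩ then u q else 0 := by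
    intro q
    by_cases hq : ((q : ℤ) + 1) = Q
    · rw [if_pos hq, if_pos, one_mul]
      apply Fin.ext
      simp only
      omega
    · rw [if_neg hq, if_neg, zero_mul]
      intro h
      apply hq
      subst h
      simp only [Fin.val_mk]
      omega
  simp_rw [h]
  simp

theorem sparse_dct2_operator_eigenvectors (N ℓ : ℕ) (hN : 2 ≤ N)
    (hl1 : 1 ≤ ℓ) (hlN : ℓ ≤ N - 1) (j : Fin N) :
    (Zdct N ℓ).mulVec (uDCT N j) =
      (2 * Real.cos ((ℓ : ℝ) * (j : ℝ) * Real.pi / N)) • uDCT N j := by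
  have hN0 : 0 < N := by omega
  have hℓN : ℓ + 1 ≤ N := by omega
  funext p
  set Q1 : ℤ := q1Z ℓ ((p : ℤ) + 1) with hQ1def
  set Q2 : ℤ := q2Z N ℓ ((p : ℤ) + 1) with hQ2def
  have hp1 : (1 : ℤ) ≤ (p : ℤ) + 1 := by omega
  have hpN : (p : ℤ) + 1 ≤ N := by have := p.isLt; omega
  have hQ1b : 1 ≤ Q1 ∧ Q1 ≤ N := by
    rw [hQ1def]; unfold q1Z; split_ifs with h <;> omega
  have hQ2b : 1 ≤ Q2 ∧ Q2 ≤ N := by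
    rw [hQ2def]; unfold q2Z; split_ifs with h <;> omega
  -- compute the matrix-vector product at row p
  have hmv : (Zdct N ℓ).mulVec (uDCT N j) p
      = uDCT N j ⟨(Q1 - 1).toNat, by omega⟩ + uDCT N j ⟨(Q2 - 1).toNat, by omega⟩ := by
    simp only [Matrix.mulVec, dotProduct, Zdct, Matrix.of_apply, add_mul]
    rw [Finset.sum_add_distrib, sum_pick Q1 hQ1b.1 hQ1b.2, sum_pick Q2 hQ2b.1 hQ2b.2]
  -- uDCT at an index equals c * gS
  have hu : ∀ (m : ℤ) (h1 : 1 ≤ m) (h2 : m ≤ N),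
      uDCT N j ⟨(m - 1).toNat, by omega⟩
        = Real.sqrt (2 / N) * (if (j : ℕ) = 0 then 1 / Real.sqrt 2 else 1) * gS N j (m - 1) := by
    intro m h1 h2
    unfold uDCT gS
    congr 2
    have : (((m - 1).toNat : ℤ) : ℝ) = ((m - 1 : ℤ) : ℝ) := by
      congr 1; omega
    push_cast at this ⊢
    rw [this]
  set c : ℝ := Real.sqrt (2 / N) * (if (j : ℕ) = 0 then 1 / Real.sqrt 2 else 1) with hc
  have hg1 : gS N j (Q1 - 1) = gS N j ((p : ℤ) - ℓ) := by
    rw [hQ1def]; unfold q1Z; split_ifs with h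
    · congr 1; omega
    · have : ((p : ℤ) + 1) * (-1) + ℓ + 1 - 1 = -((p : ℤ) - ℓ) - 1 := by ring
      have he : -((p : ℤ) + 1) + ℓ + 1 - 1 = -((p : ℤ) - ℓ) - 1 := by ring
      rw [he, gS_reflect_left]
  have hg2 : gS N j (Q2 - 1) = gS N j ((p : ℤ) + ℓ) := by
    rw [hQ2def]; unfold q2Z; split_ifs with h
    · congr 1; omega
    · have he : -((p : ℤ) + 1) - ℓ + 2 * N + 1 - 1 = 2 * N - 1 - ((p : ℤ) + ℓ) := by ring
      rw [he, gS_reflect_right N j hN0]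
  have hsum := gS_sum N j ℓ hN0 (p : ℤ)
  have hup : uDCT N j p = c * gS N j ((p : ℤ)) := by
    unfold uDCT gS
    rw [hc]
    push_cast
    ring
  rw [hmv, hu Q1 hQ1b.1 hQ1b.2, hu Q2 hQ2b.1 hQ2b.2, hg1, hg2]
  rw [Pi.smul_apply, smul_eq_mul, hup]
  rw [← mul_add, hsum]
  ring
end

section
/- Let φ be an involution on {1,...,N} and L the Laplacian of a φ-symmetric graph, i.e., w_{i,j} = w_{φ(i),φ(j)} for all i, j (weights including self-loops). Let L̄_φ be the Laplacian of the graph connecting each pair (i, φ(i)) with i ≠ φ(i) by an edge of weight 1. Then L L̄_φ = L̄_φ L. -/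
open Matrix Finset

/-- Graph Laplacian `L = D - W' + Θ`: off-diagonal entries `-w_{ij}`, diagonal entries
`d_i + θ_i` with `d_i = Σ_{j ≠ i} w_{ij}` and self-loop weight `θ_i = w_{ii}`. -/
noncomputable def graphLaplacian {N : ℕ} (W : Matrix (Fin N) (Fin N) ℝ) :
    Matrix (Fin N) (Fin N) ℝ :=
  Matrix.of fun i j =>
    if i = j then (∑ k ∈ Finset.univ \ {i}, W i k) + W i i else -W i j

/-- Laplacian of the pairing graph of an involution `φ`: unit-weight edge `(i, φ(i))`
for every `i` with `φ(i) ≠ i`. -/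
noncomputable def pairingLaplacian {N : ℕ} (φ : Fin N → Fin N) :
    Matrix (Fin N) (Fin N) ℝ :=
  Matrix.of fun i j =>
    if i = j then (if φ i ≠ i then 1 else 0)
    else if j = φ i then -1 else 0

theorem symmetric_graph_operator_commutes {N : ℕ} (φ : Fin N → Fin N)
    (hinv : ∀ i, φ (φ i) = i)
    (W : Matrix (Fin N) (Fin N) ℝ) (hWsym : W.IsSymm)
    (hWnonneg : ∀ i j, 0 ≤ W i j)
    (hφsym : ∀ i j, W i j = W (φ i) (φ j)) :
    graphLaplacian W * pairingLaplacian φ = pairingLaplacian φ * graphLaplacian W := by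
  have hbij : Function.Bijective φ := Function.Involutive.bijective hinv
  -- diagonal of the Laplacian is the full row sum
  have hdiag : ∀ i, (∑ k ∈ Finset.univ \ {i}, W i k) + W i i = ∑ k, W i k := by
    intro i
    rw [Finset.sum_sdiff_eq_sub (by simp), Finset.sum_singleton]
    ring
  -- key symmetry of L
  have key : ∀ i j, graphLaplacian W i (φ j) = graphLaplacian W (φ i) j := by
    intro i j
    by_cases h : i = φ j
    · have h2 : φ i = j := by rw [h, hinv]
      simp only [graphLaplacian, Matrix.of_apply, if_pos h, if_pos h2]
      rw [hdiag, hdiag]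
      have : ∑ k, W (φ i) k = ∑ k, W (φ i) (φ k) :=
        (Fintype.sum_bijective φ hbij _ _ (fun k => rfl)).symm
      rw [this]
      exact Finset.sum_congr rfl fun k _ => (hφsym i k)
    · have h2 : φ i ≠ j := fun hc => h (by rw [← hc, hinv])
      simp only [graphLaplacian, Matrix.of_apply, if_neg h, if_neg h2]
      rw [hφsym i (φ j), hinv]
  set P : Matrix (Fin N) (Fin N) ℝ :=
    Matrix.of fun i j => if j = φ i then 1 else 0 with hP
  have hpair : pairingLaplacian φ = 1 - P := by
    ext i j
    simp only [pairingLaplacian, hP, Matrix.of_apply, Matrix.sub_apply, Matrix.one_apply]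
    by_cases hij : i = j
    · subst hij
      by_cases hfix : φ i = i
      · simp [hfix]
      · simp [hfix, Ne.symm hfix]
    · simp only [if_neg hij]
      by_cases hj : j = φ i <;> simp [hj, hij]
  have hLP : graphLaplacian W * P = P * graphLaplacian W := by
    ext i j
    have hl : (graphLaplacian W * P) i j = graphLaplacian W i (φ j) := by
      simp only [Matrix.mul_apply, hP, Matrix.of_apply, mul_ite, mul_one, mul_zero]
      rw [Finset.sum_congr rfl (fun k _ => by
        congr 1
        exact propext ⟨fun hh => by rw [hh, hinv], fun hh => by rw [hh, hinv]⟩ :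
          ∀ k ∈ Finset.univ, (if j = φ k then graphLaplacian W i k else 0)
            = (if k = φ j then graphLaplacian W i k else 0))]
      simp [Finset.sum_ite_eq']
    have hr : (P * graphLaplacian W) i j = graphLaplacian W (φ i) j := by
      simp only [Matrix.mul_apply, hP, Matrix.of_apply, ite_mul, one_mul, zero_mul]
      simp [Finset.sum_ite_eq']
    rw [hl, hr, key]
  rw [hpair, Matrix.mul_sub, Matrix.sub_mul, Matrix.mul_one, Matrix.one_mul, hLP]
end
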